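/- Let A be a plus-one generated line arrangement in ℂ³ with exponents (a, b) and level d, with a ≤ b < d. If H, L ∈ A are hyperplanes such that both Ziegler restrictions (A^H, m^H) and (A^L, m^L) have exponents (a+b−d−1, d), then H = L. -/

import Mathlib

noncomputable section

open MvPolynomial

/-- The polynomial ring `S = ℂ[x,y,z]`. -/
abbrev S3 : Type := MvPolynomial (Fin 3) ℂ
/-- The polynomial ring in two variables, coordinate ring of a plane `H`. -/
abbrev S2 : Type := MvPolynomial (Fin 2) ℂ

/-- The linear form with coefficient vector `v`. -/
def lin3 (v : Fin 3 → ℂ) : S3 := ∑ i, MvPolynomial.C (v i) * MvPolynomial.X i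
/-- The linear form with coefficient vector `u` in two variables. -/
def lin2 (u : Fin 2 → ℂ) : S2 := ∑ i, MvPolynomial.C (u i) * MvPolynomial.X i

/-- Value of the derivation `θ = ∑ θᵢ ∂ᵢ` on the linear form with coefficients `v`. -/
def ev3 (θ : Fin 3 → S3) (v : Fin 3 → ℂ) : S3 := ∑ i, MvPolynomial.C (v i) * θ i
/-- Two-variable analogue of `ev3`. -/
def ev2 (θ : Fin 2 → S2) (u : Fin 2 → ℂ) : S2 := ∑ i, MvPolynomial.C (u i) * θ i

lemma ev3_add (θ η : Fin 3 → S3) (v : Fin 3 → ℂ) :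
    ev3 (θ + η) v = ev3 θ v + ev3 η v := by
  simp [ev3, mul_add, Finset.sum_add_distrib]

lemma ev3_smul (c : S3) (θ : Fin 3 → S3) (v : Fin 3 → ℂ) :
    ev3 (c • θ) v = c * ev3 θ v := by
  simp only [ev3, Pi.smul_apply, smul_eq_mul, Finset.mul_sum]
  exact Finset.sum_congr rfl fun i _ => by ring

lemma ev2_add (θ η : Fin 2 → S2) (u : Fin 2 → ℂ) :
    ev2 (θ + η) u = ev2 θ u + ev2 η u := by
  simp [ev2, mul_add, Finset.sum_add_distrib]

lemma ev2_smul (c : S2) (θ : Fin 2 → S2) (u : Fin 2 → ℂ) :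
    ev2 (c • θ) u = c * ev2 θ u := by
  simp only [ev2, Pi.smul_apply, smul_eq_mul, Finset.mul_sum]
  exact Finset.sum_congr rfl fun i _ => by ring

/-- A central line arrangement in `ℂ³`, given by the coefficient vectors of the defining
linear forms of its planes; the forms are nonzero and pairwise non-proportional. -/
structure Arr where
  hyps : Finset (Fin 3 → ℂ)
  forms_ne : ∀ v ∈ hyps, v ≠ 0
  nonprop : ∀ v ∈ hyps, ∀ w ∈ hyps, (∃ c : ℂ, w = c • v) → w = v

/-- The module `D(A)` of logarithmic derivations of the arrangement `A`, as a submodule of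
`Der S = S ∂x ⊕ S ∂y ⊕ S ∂z` (a derivation is recorded by its coefficient triple). -/
def DA (A : Arr) : Submodule S3 (Fin 3 → S3) where
  carrier := {θ | ∀ v ∈ A.hyps, lin3 v ∣ ev3 θ v}
  add_mem' := fun hθ hη v hv => by rw [ev3_add]; exact dvd_add (hθ v hv) (hη v hv)
  zero_mem' := fun v hv => by simp [ev3]
  smul_mem' := fun c θ hθ v hv => by rw [ev3_smul]; exact Dvd.dvd.mul_left (hθ v hv) c

/-- The Euler derivation `θ_E = x ∂x + y ∂y + z ∂z`. -/
def eulerD : Fin 3 → S3 := fun i => MvPolynomial.X i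

/-- The submodule `D_H(A) = {θ ∈ D(A) | θ(α_H) = 0}`, where `H` has coefficient vector `v`. -/
def DH (A : Arr) (v : Fin 3 → ℂ) : Submodule S3 (Fin 3 → S3) where
  carrier := {θ | (∀ w ∈ A.hyps, lin3 w ∣ ev3 θ w) ∧ ev3 θ v = 0}
  add_mem' := fun hθ hη => ⟨fun w hw => by rw [ev3_add]; exact dvd_add (hθ.1 w hw) (hη.1 w hw),
    by rw [ev3_add, hθ.2, hη.2, add_zero]⟩
  zero_mem' := ⟨fun w hw => by simp [ev3], by simp [ev3]⟩
  smul_mem' := fun c θ hθ => ⟨fun w hw => by rw [ev3_smul]; exact Dvd.dvd.mul_left (hθ.1 w hw) c,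
    by rw [ev3_smul, hθ.2, mul_zero]⟩

/-- A derivation is homogeneous of (polynomial) degree `k` if all its coefficients are. -/
def HomDeg3 (θ : Fin 3 → S3) (k : ℕ) : Prop := ∀ i, (θ i).IsHomogeneous k
/-- Two-variable analogue of `HomDeg3`. -/
def HomDeg2 (θ : Fin 2 → S2) (k : ℕ) : Prop := ∀ i, (θ i).IsHomogeneous k

/-- `A` is plus-one generated with exponents `(a, b)` and level `d`: `D(A)` has a minimal
homogeneous generating set `{θ_E, θ₂, θ₃, φ}` of degrees `1, a, b, d` with a unique
homogeneous relation `f₁θ_E + f₂θ₂ + f₃θ₃ + αφ = 0`, `α` a nonzero linear form. -/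
def IsPOG (A : Arr) (a b d : ℕ) : Prop :=
  ∃ θ₂ θ₃ φ : Fin 3 → S3,
    HomDeg3 θ₂ a ∧ HomDeg3 θ₃ b ∧ HomDeg3 φ d ∧
    Submodule.span S3 ({eulerD, θ₂, θ₃, φ} : Set (Fin 3 → S3)) = DA A ∧
    eulerD ∉ Submodule.span S3 ({θ₂, θ₃, φ} : Set (Fin 3 → S3)) ∧
    θ₂ ∉ Submodule.span S3 ({eulerD, θ₃, φ} : Set (Fin 3 → S3)) ∧
    θ₃ ∉ Submodule.span S3 ({eulerD, θ₂, φ} : Set (Fin 3 → S3)) ∧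
    φ ∉ Submodule.span S3 ({eulerD, θ₂, θ₃} : Set (Fin 3 → S3)) ∧
    ∃ f₁ f₂ f₃ α : S3, α ≠ 0 ∧ α.IsHomogeneous 1 ∧
      f₁ • eulerD + f₂ • θ₂ + f₃ • θ₃ + α • φ = 0 ∧
      ∀ g₁ g₂ g₃ g₄ : S3,
        g₁ • eulerD + g₂ • θ₂ + g₃ • θ₃ + g₄ • φ = 0 →
        ∃ h : S3, g₁ = h * f₁ ∧ g₂ = h * f₂ ∧ g₃ = h * f₃ ∧ g₄ = h * α

/-- `A` is nearly free with exponents `(a, b)`: plus-one generated with level `d = b`. -/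
def IsNearlyFree (A : Arr) (a b : ℕ) : Prop := IsPOG A a b b

/-- `A` is free with exponents `(1, a, b)`: `D(A)` has a homogeneous basis
`{θ_E, θ₁, θ₂}` of degrees `1, a, b`. -/
def IsFree (A : Arr) (a b : ℕ) : Prop :=
  ∃ θ₁ θ₂ : Fin 3 → S3, HomDeg3 θ₁ a ∧ HomDeg3 θ₂ b ∧
    Submodule.span S3 ({eulerD, θ₁, θ₂} : Set (Fin 3 → S3)) = DA A ∧
    ∀ f g h : S3, f • eulerD + g • θ₁ + h • θ₂ = 0 → f = 0 ∧ g = 0 ∧ h = 0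

/-- The projective plane `ℙ² = ℙ(ℂ³)`. -/
abbrev PP : Type := Projectivization ℂ (Fin 3 → ℂ)

/-- The projective point `p` lies on the line defined by the linear form with coefficients `v`. -/
def pOn (v : Fin 3 → ℂ) (p : PP) : Prop := ∑ i, v i * p.rep i = 0

/-- The number `n_H` of intersection points of `A` lying on the line `H` (coefficients `v`). -/
def nPoints (A : Arr) (v : Fin 3 → ℂ) : ℕ :=
  Set.ncard {p : PP | pOn v p ∧ ∃ w ∈ A.hyps, w ≠ v ∧ pOn w p}

/-- The multiplicity `m(X)` of a projective point: the number of lines of `A` through it. -/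
def multPt (A : Arr) (p : PP) : ℕ :=
  Set.ncard {w : Fin 3 → ℂ | w ∈ A.hyps ∧ pOn w p}

/-- The maximal multiplicity `m(A)` of an intersection point of `A`. -/
def mMax (A : Arr) : ℕ := ⨆ p : PP, multPt A p

/-- `b₂⁰(A)`, the constant coefficient of `χ₀(A,t) = χ(A,t)/(t-1) = t² - (|A|-1)t + b₂⁰(A)`. -/
def b20 (A : Arr) : ℕ := (∑ᶠ p : PP, (multPt A p - 1)) - (A.hyps.card - 1)

/-- Deletion of a hyperplane from an arrangement. -/
def Arr.delete (A : Arr) (v : Fin 3 → ℂ) : Arr where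
  hyps := A.hyps.erase v
  forms_ne := fun w hw => A.forms_ne w (Finset.mem_of_mem_erase hw)
  nonprop := fun w hw u hu h =>
    A.nonprop w (Finset.mem_of_mem_erase hw) u (Finset.mem_of_mem_erase hu) h

/-- The restriction of the linear form `w` to the plane with basis `b`. -/
def restrForm (b : Fin 2 → Fin 3 → ℂ) (w : Fin 3 → ℂ) : Fin 2 → ℂ :=
  fun j => ∑ i, w i * b j i

/-- The Ziegler multiplicity of the point `H ∩ H_w` on the line `H` (coefficients `v`):
the number of hyperplanes of `A` other than `H` passing through this point. -/
def multOn (A : Arr) (v : Fin 3 → ℂ) (b : Fin 2 → Fin 3 → ℂ) (w : Fin 3 → ℂ) : ℕ :=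
  Set.ncard {w' : Fin 3 → ℂ | w' ∈ A.hyps ∧ w' ≠ v ∧
    ∃ c : ℂ, restrForm b w' = c • restrForm b w}

/-- The derivation module `D(A^H, m^H)` of the Ziegler (multi)restriction of `A` onto the
line with coefficients `v`, computed in the coordinates given by the basis `b` of `H`.
(For `v ∉ A` this is the multirestriction with multiplicities `m(X) = #{K ∈ A | X ⊂ K}`.) -/
def DZ (A : Arr) (v : Fin 3 → ℂ) (b : Fin 2 → Fin 3 → ℂ) : Submodule S2 (Fin 2 → S2) where
  carrier := {θ | ∀ w ∈ A.hyps, w ≠ v →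
    (lin2 (restrForm b w)) ^ (multOn A v b w) ∣ ev2 θ (restrForm b w)}
  add_mem' := fun hθ hη w hw hwv => by rw [ev2_add]; exact dvd_add (hθ w hw hwv) (hη w hw hwv)
  zero_mem' := fun w hw hwv => by simp [ev2]
  smul_mem' := fun c θ hθ w hw hwv => by rw [ev2_smul]; exact Dvd.dvd.mul_left (hθ w hw hwv) c

/-- `(e₁, e₂)` is the splitting type of the logarithmic bundle of `A` along the line `v`;
by Yoshinaga's theorem this is expressed through the exponents of the corresponding
(multi)restriction: `D(A^H, m^H)` has a homogeneous basis of degrees `e₁`, `e₂`. -/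
def SplitTypeIs (A : Arr) (v : Fin 3 → ℂ) (e₁ e₂ : ℕ) : Prop :=
  ∃ b : Fin 2 → (Fin 3 → ℂ), LinearIndependent ℂ b ∧ (∀ j, ∑ i, v i * b j i = 0) ∧
    ∃ θ₁ θ₂ : Fin 2 → S2, HomDeg2 θ₁ e₁ ∧ HomDeg2 θ₂ e₂ ∧
      Submodule.span S2 ({θ₁, θ₂} : Set (Fin 2 → S2)) = DZ A v b ∧
      ∀ f g : S2, f • θ₁ + g • θ₂ = 0 → f = 0 ∧ g = 0

/-- For `v ∈ A`, the splitting type along `v` is exactly the pair of exponents of the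
Ziegler restriction `(A^H, m^H)`. -/
abbrev ZieglerExpsAre (A : Arr) (v : Fin 3 → ℂ) (e₁ e₂ : ℕ) : Prop := SplitTypeIs A v e₁ e₂

/-- A generic line arrangement: all intersection points in `ℙ²` are double points. -/
def IsGeneric (A : Arr) : Prop := ∀ p : PP, multPt A p ≤ 2

/-!
If `H ∈ A` has Ziegler exponents `(a + b - d - 1, d)`, then `α_H` divides the linear coefficient
`α` of the unique relation. Subtracting multiples of `θ_E` makes `θ₂, θ₃` tangent to `H`; their
Ziegler restrictions have degrees `a, b < d`, so both are multiples `q₂ ρ₁, q₃ ρ₁` of the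
low-degree basis element `ρ₁` of `D(A^H, m^H)`. Lifting `q₂, q₃` to `S`, the derivation
`q₃ η₂ - q₂ η₃` restricts to zero, hence lies in `α_H · D(A)`, which is a relation between
`θ_E, θ₂, θ₃, φ` with `φ`-coefficient divisible by `α_H`. By uniqueness of the relation, either
`α_H ∣ α`, or `α_H` divides the lift of `q₂`; in the latter case `η₂ ∈ α_H · D(A)`, and a degree
count forces `η₂ = 0`, i.e. `θ₂ ∈ S θ_E`, contradicting minimality. As `α` is a linear form, it
can be divisible by `α_H` for at most one `H ∈ A`.
-/

open MvPolynomial Matrix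

lemma exists_eq_C_mul_of_dvd {σ R : Type*} [CommRing R] [IsDomain R]
    {l p : MvPolynomial σ R} (hl : l.totalDegree = 1) (hp : p.totalDegree = 1) (h : l ∣ p) :
    ∃ c : R, p = C c * l := by
  obtain ⟨g, rfl⟩ := h
  have hl0 : l ≠ 0 := by rintro rfl; simp at hl
  have hg0 : g ≠ 0 := by rintro rfl; simp at hp
  rw [totalDegree_mul_of_isDomain hl0 hg0, hl] at hp
  exact ⟨coeff 0 g, by rw [← totalDegree_eq_zero_iff_eq_C.mp (by omega), mul_comm]⟩

section HomogeneousComponents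

variable {ι σ R : Type*} [CommSemiring R]

attribute [local instance] MvPolynomial.gradedAlgebra in
lemma homogeneousComponent_mul_of_isHomogeneous {q : MvPolynomial σ R} {m : ℕ}
    (hq : q.IsHomogeneous m) (p : MvPolynomial σ R) (n : ℕ) :
    homogeneousComponent n (p * q) =
      (if m ≤ n then homogeneousComponent (n - m) p else 0) * q := by
  classical
  rw [← decomposition.decompose'_apply, ← decomposition.decompose'_apply]
  have := DirectSum.coe_decompose_mul_of_right_mem (homogeneousSubmodule σ R) n (a := p)
    ((mem_homogeneousSubmodule m q).mpr hq)
  split_ifs at this ⊢ <;> simpa using this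

lemma homogeneousComponent_mul_eq_zero_of_lt {q : MvPolynomial σ R} {m n : ℕ}
    (hq : q.IsHomogeneous m) (h : n < m) (p : MvPolynomial σ R) :
    homogeneousComponent n (p * q) = 0 := by
  rw [homogeneousComponent_mul_of_isHomogeneous hq, if_neg h.not_ge, zero_mul]

lemma exists_eq_smul_of_mem_span_pair {x θ₁ θ₂ : ι → MvPolynomial σ R} {e d k : ℕ}
    (hθ₁ : ∀ i, (θ₁ i).IsHomogeneous e) (hθ₂ : ∀ i, (θ₂ i).IsHomogeneous d)
    (hx : ∀ i, (x i).IsHomogeneous k) (hkd : k < d)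
    (hmem : x ∈ Submodule.span (MvPolynomial σ R) {θ₁, θ₂}) :
    ∃ q : MvPolynomial σ R, x = q • θ₁ := by
  obtain ⟨f, g, rfl⟩ := Submodule.mem_span_pair.mp hmem
  refine ⟨if e ≤ k then homogeneousComponent (k - e) f else 0, funext fun i => ?_⟩
  rw [← homogeneousComponent_eq_self (hx i)]
  simp only [Pi.add_apply, Pi.smul_apply, smul_eq_mul, map_add,
    homogeneousComponent_mul_of_isHomogeneous (hθ₁ i),
    homogeneousComponent_mul_eq_zero_of_lt (hθ₂ i) hkd, add_zero]

end HomogeneousComponents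

lemma Submodule.exists_eq_of_mem_span_four {R M : Type*} [Semiring R] [AddCommMonoid M]
    [Module R M] {e₁ e₂ e₃ e₄ x : M} (hx : x ∈ Submodule.span R {e₁, e₂, e₃, e₄}) :
    ∃ c₁ c₂ c₃ c₄ : R, x = c₁ • e₁ + c₂ • e₂ + c₃ • e₃ + c₄ • e₄ := by
  obtain ⟨c₁, y, hy, rfl⟩ := Submodule.mem_span_insert.mp hx
  obtain ⟨c₂, c₃, c₄, rfl⟩ := by
    simpa [Submodule.mem_span_insert, Submodule.mem_span_singleton] using hy
  exact ⟨c₁, c₂, c₃, c₄, by abel⟩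

lemma dvd_or_dvd_of_syzygy {R M : Type*} [CommRing R] [AddCommGroup M] [Module R M]
    {e θ₂ θ₃ φ : M} {f₁ f₂ f₃ α l r₂ r₃ p₂ p₃ s₁ s₂ s₃ s₄ : R} (hl : Prime l)
    (huniq : ∀ g₁ g₂ g₃ g₄ : R, g₁ • e + g₂ • θ₂ + g₃ • θ₃ + g₄ • φ = 0 →
      ∃ h : R, g₁ = h * f₁ ∧ g₂ = h * f₂ ∧ g₃ = h * f₃ ∧ g₄ = h * α)
    (hrel : r₃ • (θ₂ - p₂ • e) - r₂ • (θ₃ - p₃ • e) =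
      l • (s₁ • e + s₂ • θ₂ + s₃ • θ₃ + s₄ • φ)) :
    l ∣ α ∨ l ∣ r₂ := by
  obtain ⟨h, -, -, h₃, h₄⟩ := huniq (r₂ * p₃ - r₃ * p₂ - l * s₁) (r₃ - l * s₂) (-r₂ - l * s₃)
    (-(l * s₄)) (by linear_combination (norm := module) hrel)
  by_cases hlh : l ∣ h
  · obtain ⟨k, rfl⟩ := hlh
    exact Or.inr ⟨-(k * f₃) - s₃, by linear_combination -h₃⟩
  · exact Or.inl <| (hl.dvd_or_dvd ⟨-s₄, by linear_combination -h₄⟩).resolve_left hlh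

section Orthogonality

variable {v : Fin 3 → ℂ} {b : Fin 2 → Fin 3 → ℂ}

lemma surjective_mulVecLin_of_linearIndependent (hb : LinearIndependent ℂ b) :
    Function.Surjective (Matrix.of b).mulVecLin := by
  rw [← LinearMap.range_eq_top]
  apply Submodule.eq_top_of_finrank_eq
  have := (Matrix.of b).rank_eq_finrank_span_row
  rw [Matrix.rank] at this
  rw [this, show (Matrix.of b).row = b from rfl, finrank_span_eq_card hb]
  simp

lemma exists_dual_of_linearIndependent (hb : LinearIndependent ℂ b) :
    ∃ m : Fin 2 → Fin 3 → ℂ, ∀ j k, m j ⬝ᵥ b k = if j = k then 1 else 0 := by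
  choose m hm using fun j : Fin 2 => surjective_mulVecLin_of_linearIndependent hb (Pi.single j 1)
  refine ⟨m, fun j k => ?_⟩
  have := congrFun (hm j) k
  simp only [Matrix.mulVecLin_apply, Matrix.mulVec, Matrix.of_apply] at this
  rw [dotProduct_comm, this, Pi.single_apply]
  exact if_congr eq_comm rfl rfl

lemma exists_eq_smul_of_orthogonal (hv : v ≠ 0) (hb : LinearIndependent ℂ b)
    (hvb : ∀ j, v ⬝ᵥ b j = 0) {c : Fin 3 → ℂ} (hc : ∀ j, c ⬝ᵥ b j = 0) :
    ∃ l : ℂ, c = l • v := by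
  set f := (Matrix.of b).mulVecLin
  have hker : ∀ x, x ∈ LinearMap.ker f ↔ ∀ j, x ⬝ᵥ b j = 0 := fun x => by
    simp [f, funext_iff, Matrix.mulVec, dotProduct_comm]
  have hrank : Module.finrank ℂ (LinearMap.ker f) = 1 := by
    have := f.finrank_range_add_finrank_ker
    rw [LinearMap.range_eq_top.mpr (surjective_mulVecLin_of_linearIndependent hb)] at this
    simp at this
    omega
  obtain ⟨l, hl⟩ := (finrank_eq_one_iff_of_nonzero' (⟨v, (hker v).2 hvb⟩ : LinearMap.ker f)
    (by simpa using hv)).mp hrank ⟨c, (hker c).2 hc⟩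
  exact ⟨l, by simpa using congrArg Subtype.val hl.symm⟩

end Orthogonality

section LinearForms

lemma lin2_smul (c : ℂ) (u : Fin 2 → ℂ) : lin2 (c • u) = C c * lin2 u := by
  simp [lin2, mul_add, mul_assoc]

lemma lin3_add (x y : Fin 3 → ℂ) : lin3 (x + y) = lin3 x + lin3 y := by
  simp [lin3, add_mul, Finset.sum_add_distrib]

lemma lin3_smul (c : ℂ) (v : Fin 3 → ℂ) : lin3 (c • v) = C c * lin3 v := by
  simp [lin3, Finset.mul_sum, mul_assoc]

lemma coeff_lin3 (v : Fin 3 → ℂ) (i : Fin 3) : coeff (Finsupp.single i 1) (lin3 v) = v i := by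
  simp [lin3, coeff_sum, coeff_X, Finsupp.single_left_inj]

lemma lin3_injective : Function.Injective lin3 := fun x y h =>
  funext fun i => by simpa only [coeff_lin3] using congrArg (coeff (Finsupp.single i 1)) h

lemma lin3_ne_zero {v : Fin 3 → ℂ} (hv : v ≠ 0) : lin3 v ≠ 0 := by
  rw [← lin3_injective.ne_iff] at hv
  simpa [lin3] using hv

lemma isHomogeneous_lin3 (v : Fin 3 → ℂ) : (lin3 v).IsHomogeneous 1 :=
  IsHomogeneous.sum _ _ _ fun i _ => isHomogeneous_C_mul_X (v i) i

lemma totalDegree_lin3 {v : Fin 3 → ℂ} (hv : v ≠ 0) : (lin3 v).totalDegree = 1 :=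
  (isHomogeneous_lin3 v).totalDegree (lin3_ne_zero hv)

lemma prime_lin3 {v : Fin 3 → ℂ} (hv : v ≠ 0) : Prime (lin3 v) := by
  obtain ⟨i, hi⟩ := Function.ne_iff.mp hv
  refine irreducible_iff_prime.mp (irreducible_of_totalDegree_eq_one (totalDegree_lin3 hv)
    fun x hx => isUnit_iff_ne_zero.mpr ?_)
  rintro rfl
  exact hi (zero_dvd_iff.mp (coeff_lin3 v i ▸ hx _))

lemma Arr.eq_of_lin3_dvd_lin3 (A : Arr) {v w : Fin 3 → ℂ} (hv : v ∈ A.hyps) (hw : w ∈ A.hyps)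
    (h : lin3 w ∣ lin3 v) : v = w := by
  obtain ⟨c, hc⟩ := exists_eq_C_mul_of_dvd (totalDegree_lin3 (A.forms_ne w hw))
    (totalDegree_lin3 (A.forms_ne v hv)) h
  rw [← lin3_smul] at hc
  exact A.nonprop w hw v hv ⟨c, lin3_injective hc⟩

lemma ev3_add_right (θ : Fin 3 → S3) (x y : Fin 3 → ℂ) :
    ev3 θ (x + y) = ev3 θ x + ev3 θ y := by
  simp [ev3, add_mul, Finset.sum_add_distrib]

lemma ev3_smul_right (θ : Fin 3 → S3) (c : ℂ) (x : Fin 3 → ℂ) :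
    ev3 θ (c • x) = C c * ev3 θ x := by
  simp [ev3, Finset.mul_sum, mul_assoc]

lemma ev3_sub (θ η : Fin 3 → S3) (v : Fin 3 → ℂ) : ev3 (θ - η) v = ev3 θ v - ev3 η v := by
  simp [ev3, mul_sub, Finset.sum_sub_distrib]

lemma ev3_single (θ : Fin 3 → S3) (i : Fin 3) : ev3 θ (Pi.single i 1) = θ i := by
  simp [ev3, Pi.single_apply]

lemma ev3_eulerD (v : Fin 3 → ℂ) : ev3 eulerD v = lin3 v := rfl

lemma ev3_isHomogeneous {θ : Fin 3 → S3} {k : ℕ} (hθ : HomDeg3 θ k) (w : Fin 3 → ℂ) :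
    (ev3 θ w).IsHomogeneous k :=
  IsHomogeneous.sum _ _ _ fun i _ => (hθ i).C_mul (w i)

end LinearForms

section PlaneCoordinates

structure IsPlaneFrame (v : Fin 3 → ℂ) (b m : Fin 2 → Fin 3 → ℂ) : Prop where
  ne_zero : v ≠ 0
  linearIndependent : LinearIndependent ℂ b
  orthogonal : ∀ j, v ⬝ᵥ b j = 0
  dual : ∀ j k, m j ⬝ᵥ b k = if j = k then 1 else 0

variable {v : Fin 3 → ℂ} {b m : Fin 2 → Fin 3 → ℂ}

lemma exists_isPlaneFrame (hv : v ≠ 0) (hb : LinearIndependent ℂ b)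
    (hvb : ∀ j, v ⬝ᵥ b j = 0) : ∃ m, IsPlaneFrame v b m :=
  (exists_dual_of_linearIndependent hb).imp fun _ hm => ⟨hv, hb, hvb, hm⟩

namespace IsPlaneFrame

lemma exists_eq_sum_add_smul (F : IsPlaneFrame v b m) (c : Fin 3 → ℂ) :
    ∃ l : ℂ, c = ∑ j, (c ⬝ᵥ b j) • m j + l • v := by
  refine (exists_eq_smul_of_orthogonal F.ne_zero F.linearIndependent F.orthogonal
    (c := c - ∑ j, (c ⬝ᵥ b j) • m j) fun k => ?_).imp fun l hl => (sub_eq_iff_eq_add'.mp hl)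
  fin_cases k <;> simp [sub_dotProduct, F.dual]

lemma exists_eq_smul_add_smul_of_restrForm_eq (F : IsPlaneFrame v b m) {x w : Fin 3 → ℂ}
    {c : ℂ} (h : restrForm b x = c • restrForm b w) : ∃ l : ℂ, x = c • w + l • v :=
  (exists_eq_smul_of_orthogonal F.ne_zero F.linearIndependent F.orthogonal
    (c := x - c • w) fun k => by
      rw [sub_dotProduct, smul_dotProduct, smul_eq_mul, sub_eq_zero]
      exact congrFun h k).imp
    fun _ hl => sub_eq_iff_eq_add'.mp hl

end IsPlaneFrame

/-- Restriction of polynomials to the plane spanned by `b`, in the coordinates given by `b`. -/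
def restrictPoly (b : Fin 2 → Fin 3 → ℂ) : S3 →ₐ[ℂ] S2 :=
  aeval fun i => lin2 fun j => b j i

def liftPoly (m : Fin 2 → Fin 3 → ℂ) : S2 →ₐ[ℂ] S3 :=
  aeval fun j => lin3 (m j)

lemma restrictPoly_lin3 (b : Fin 2 → Fin 3 → ℂ) (w : Fin 3 → ℂ) :
    restrictPoly b (lin3 w) = lin2 (restrForm b w) := by
  simp only [restrictPoly, lin3, lin2, restrForm, map_sum, map_mul, aeval_C, aeval_X,
    algebraMap_eq, Finset.mul_sum, Finset.sum_mul]
  rw [Finset.sum_comm]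
  exact Finset.sum_congr rfl fun j _ => Finset.sum_congr rfl fun i _ => by ring

lemma liftPoly_lin2 (m : Fin 2 → Fin 3 → ℂ) (u : Fin 2 → ℂ) :
    liftPoly m (lin2 u) = lin3 (∑ j, u j • m j) := by
  simp [liftPoly, lin2, Fin.sum_univ_two, lin3_add, lin3_smul]

lemma IsPlaneFrame.restrictPoly_lin3_self (F : IsPlaneFrame v b m) :
    restrictPoly b (lin3 v) = 0 := by
  rw [restrictPoly_lin3, show restrForm b v = 0 from funext F.orthogonal]
  simp [lin2]

lemma IsPlaneFrame.restrictPoly_liftPoly (F : IsPlaneFrame v b m) (q : S2) :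
    restrictPoly b (liftPoly m q) = q := by
  suffices (restrictPoly b).comp (liftPoly m) = AlgHom.id ℂ S2 from
    AlgHom.congr_fun this q
  refine algHom_ext fun j => ?_
  rw [AlgHom.comp_apply, liftPoly, aeval_X, restrictPoly_lin3]
  fin_cases j <;> simp [lin2, restrForm, ← dotProduct.eq_1, F.dual]

lemma IsPlaneFrame.lin3_dvd_of_restrictPoly_eq_zero (F : IsPlaneFrame v b m) {p : S3}
    (hp : restrictPoly b p = 0) : lin3 v ∣ p := by
  set mk := Ideal.Quotient.mkₐ ℂ (Ideal.span {lin3 v})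
  suffices mk.comp ((liftPoly m).comp (restrictPoly b)) = mk by
    simpa [hp, mk, Ideal.Quotient.eq_zero_iff_mem, Ideal.mem_span_singleton] using
      (AlgHom.congr_fun this p).symm
  refine algHom_ext fun i => ?_
  obtain ⟨l, hl⟩ := F.exists_eq_sum_add_smul (Pi.single i 1)
  have hX : X i = lin3 (Pi.single i 1) := by simp [lin3, Pi.single_apply]
  simp only [single_dotProduct, one_mul] at hl
  rw [AlgHom.comp_apply, AlgHom.comp_apply, Ideal.Quotient.mkₐ_eq_mk, Ideal.Quotient.eq,
    Ideal.mem_span_singleton, restrictPoly, aeval_X, liftPoly_lin2, hX, hl, lin3_add, lin3_smul]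
  exact ⟨-C l, by ring⟩

end PlaneCoordinates

section ZieglerRestriction

variable {v : Fin 3 → ℂ} {b m : Fin 2 → Fin 3 → ℂ}

/-- The Ziegler restriction `π(θ)` of a derivation tangent to `H : v = 0`, in the coordinates
of `H` given by `b` and the dual covectors `m`. -/
def zieglerRestrict (b m : Fin 2 → Fin 3 → ℂ) (θ : Fin 3 → S3) : Fin 2 → S2 :=
  fun j => restrictPoly b (ev3 θ (m j))

lemma zieglerRestrict_smul (f : S3) (θ : Fin 3 → S3) :
    zieglerRestrict b m (f • θ) = restrictPoly b f • zieglerRestrict b m θ :=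
  funext fun j => by simp [zieglerRestrict, ev3_smul]

lemma zieglerRestrict_sub (θ η : Fin 3 → S3) :
    zieglerRestrict b m (θ - η) = zieglerRestrict b m θ - zieglerRestrict b m η :=
  funext fun j => by simp [zieglerRestrict, ev3_sub]

lemma zieglerRestrict_isHomogeneous {θ : Fin 3 → S3} {k : ℕ}
    (hθ : HomDeg3 θ k) : HomDeg2 (zieglerRestrict b m θ) k := fun j =>
  one_mul k ▸ (ev3_isHomogeneous hθ (m j)).aeval _
    fun i => IsHomogeneous.sum _ _ _ fun j _ => isHomogeneous_C_mul_X (b j i) j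

lemma IsPlaneFrame.ev2_zieglerRestrict (F : IsPlaneFrame v b m) {θ : Fin 3 → S3}
    (hθ : ev3 θ v = 0) (c : Fin 3 → ℂ) :
    ev2 (zieglerRestrict b m θ) (restrForm b c) = restrictPoly b (ev3 θ c) := by
  obtain ⟨l, hl⟩ := F.exists_eq_sum_add_smul c
  conv_rhs => rw [hl]
  simp [ev2, zieglerRestrict, Fin.sum_univ_two, ev3_add_right, ev3_smul_right, hθ, restrForm,
    dotProduct]

lemma IsPlaneFrame.lin3_dvd_of_zieglerRestrict_eq_zero (F : IsPlaneFrame v b m)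
    {θ : Fin 3 → S3} (hθ : ev3 θ v = 0) (h : zieglerRestrict b m θ = 0) (i : Fin 3) :
    lin3 v ∣ θ i := by
  refine F.lin3_dvd_of_restrictPoly_eq_zero ?_
  rw [← ev3_single θ i, ← F.ev2_zieglerRestrict hθ, h]
  simp [ev2]

lemma IsPlaneFrame.zieglerRestrict_mem_DZ {A : Arr} (F : IsPlaneFrame v b m) (hv : v ∈ A.hyps)
    {θ : Fin 3 → S3} (hθ : θ ∈ DH A v) : zieglerRestrict b m θ ∈ DZ A v b := by
  classical
  intro w hw _
  set u := restrForm b w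
  set T := A.hyps.filter fun x => x ≠ v ∧ ∃ c : ℂ, restrForm b x = c • u
  have hcard : multOn A v b w = T.card := by
    rw [multOn, ← Set.ncard_coe_finset]
    congr 1
    ext x
    simp [T, u]
  -- a line of `T` differs from `w` by a multiple of `v`, on which `θ` vanishes
  have hdvd : ∀ x ∈ T, lin3 x ∣ ev3 θ w := by
    intro x hx
    obtain ⟨hxA, hxv, c, hc⟩ := Finset.mem_filter.mp hx
    obtain ⟨l, rfl⟩ := F.exists_eq_smul_add_smul_of_restrForm_eq hc
    have hc0 : c ≠ 0 := by
      rintro rfl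
      exact hxv (A.nonprop v hv _ hxA ⟨l, by simp⟩)
    have := hθ.1 _ hxA
    rwa [ev3_add_right, ev3_smul_right, ev3_smul_right, hθ.2, mul_zero, add_zero,
      (hc0.isUnit.map C).dvd_mul_left] at this
  have hprod : ∏ x ∈ T, lin3 x ∣ ev3 θ w := by
    refine Finset.prod_dvd_of_isRelPrime (fun x hx y hy hxy => ?_) hdvd
    have hxA := (Finset.mem_filter.mp hx).1
    have hyA := (Finset.mem_filter.mp hy).1
    exact ((prime_lin3 (A.forms_ne x hxA)).irreducible.isRelPrime_iff_not_dvd).mpr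
      fun h => hxy (A.eq_of_lin3_dvd_lin3 hyA hxA h).symm
  rw [hcard, F.ev2_zieglerRestrict hθ.2]
  calc lin2 u ^ T.card = ∏ x ∈ T, lin2 u := (Finset.prod_const _).symm
    _ ∣ ∏ x ∈ T, restrictPoly b (lin3 x) := Finset.prod_dvd_prod_of_dvd _ _ fun x hx => by
        obtain ⟨c, hc⟩ := (Finset.mem_filter.mp hx).2.2
        rw [restrictPoly_lin3, hc, lin2_smul]
        exact dvd_mul_left _ _
    _ = restrictPoly b (∏ x ∈ T, lin3 x) := (map_prod _ _ _).symm
    _ ∣ restrictPoly b (ev3 θ w) := map_dvd _ hprod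

end ZieglerRestriction

section TangentDerivations

variable {A : Arr} {v : Fin 3 → ℂ}

lemma eulerD_mem_DA : eulerD ∈ DA A := fun _ _ => dvd_rfl

lemma exists_sub_smul_eulerD_mem_DH (hv : v ∈ A.hyps) {θ : Fin 3 → S3} (hθ : θ ∈ DA A)
    {k : ℕ} (hk : HomDeg3 θ k) :
    ∃ p : S3, θ - p • eulerD ∈ DH A v ∧ HomDeg3 (θ - p • eulerD) k := by
  obtain ⟨p, hp⟩ := hθ v hv
  -- the degree `k - 1` part of `p` already does the job, and keeps `θ - p • θ_E` homogeneous
  set p' := if 1 ≤ k then homogeneousComponent (k - 1) p else 0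
  have hp' : ∀ i, p' * X i = homogeneousComponent k (p * X i) := fun i =>
    (homogeneousComponent_mul_of_isHomogeneous (isHomogeneous_X ℂ i) p k).symm
  refine ⟨p', ⟨Submodule.sub_mem _ hθ (Submodule.smul_mem _ _ eulerD_mem_DA), ?_⟩, fun i => ?_⟩
  · rw [ev3_sub, ev3_smul, ev3_eulerD, sub_eq_zero,
      ← homogeneousComponent_eq_self (ev3_isHomogeneous hk v), hp, mul_comm,
      homogeneousComponent_mul_of_isHomogeneous (isHomogeneous_lin3 v)]
  · have : (p' • eulerD) i = homogeneousComponent k (p * X i) := hp' i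
    exact (hk i).sub (this ▸ homogeneousComponent_isHomogeneous k _)

lemma IsPlaneFrame.exists_eq_lin3_smul_of_zieglerRestrict_eq_zero {b m : Fin 2 → Fin 3 → ℂ}
    (F : IsPlaneFrame v b m) (hv : v ∈ A.hyps) {η : Fin 3 → S3} (hη : η ∈ DH A v)
    (h : zieglerRestrict b m η = 0) : ∃ ψ ∈ DA A, η = lin3 v • ψ := by
  choose ψ hψ using F.lin3_dvd_of_zieglerRestrict_eq_zero hη.2 h
  have hηψ : η = lin3 v • ψ := funext hψ
  refine ⟨ψ, fun w hw => ?_, hηψ⟩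
  have hψv : ev3 ψ v = 0 := by
    have := hη.2
    rwa [hηψ, ev3_smul, mul_eq_zero, or_iff_right (lin3_ne_zero F.ne_zero)] at this
  have hdvd : lin3 w ∣ lin3 v * ev3 ψ w := by
    rw [← ev3_smul, ← hηψ]
    exact hη.1 w hw
  by_cases hwv : w = v
  · rw [hwv, hψv]
    exact dvd_zero _
  · exact ((prime_lin3 (A.forms_ne w hw)).dvd_or_dvd hdvd).resolve_left
      fun h => hwv (A.eq_of_lin3_dvd_lin3 hv hw h).symm

end TangentDerivations

section PlusOneGenerated

variable {A : Arr} {a b d : ℕ} {θ₂ θ₃ φ : Fin 3 → S3}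

lemma eq_zero_of_eq_lin3_smul (hab : a ≤ b) (hbd : b < d) (h2 : HomDeg3 θ₂ a)
    (h3 : HomDeg3 θ₃ b) (hφ : HomDeg3 φ d)
    (hspan : Submodule.span S3 {eulerD, θ₂, θ₃, φ} = DA A) {v : Fin 3 → ℂ} (hv : v ≠ 0)
    {η ψ : Fin 3 → S3} (hηv : ev3 η v = 0) (hη : HomDeg3 η a) (hψ : ψ ∈ DA A)
    (hηψ : η = lin3 v • ψ) : η = 0 := by
  obtain ⟨t₁, t₂, t₃, t₄, rfl⟩ := Submodule.exists_eq_of_mem_span_four (hspan ▸ hψ)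
  -- in degree `a`, only the Euler summand of `α_H ψ` survives
  set c := if 1 ≤ a then homogeneousComponent (a - 1) (lin3 v * t₁) else 0
  have hηE : η = c • eulerD := funext fun i => by
    have hlow : ∀ {θ : S3} {e : ℕ}, θ.IsHomogeneous e → a ≤ e → ∀ t : S3,
        homogeneousComponent a (lin3 v * t * θ) = 0 := fun hθ hae t => by
      rw [mul_assoc, mul_left_comm]
      exact homogeneousComponent_mul_eq_zero_of_lt ((isHomogeneous_lin3 v).mul hθ) (by omega) t
    rw [← homogeneousComponent_eq_self (hη i), hηψ]
    simp only [Pi.smul_apply, Pi.add_apply, smul_eq_mul, mul_add, map_add, eulerD, ← mul_assoc]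
    rw [hlow (h2 i) le_rfl, hlow (h3 i) hab, hlow (hφ i) (by omega), add_zero, add_zero, add_zero]
    exact homogeneousComponent_mul_of_isHomogeneous (isHomogeneous_X ℂ i) _ a
  rw [hηE, ev3_smul, ev3_eulerD, mul_eq_zero, or_iff_left (lin3_ne_zero hv)] at hηv
  rw [hηE, hηv, zero_smul]

lemma lin3_dvd_of_zieglerExpsAre (hab : a ≤ b) (hbd : b < d) (h2 : HomDeg3 θ₂ a)
    (h3 : HomDeg3 θ₃ b) (hφ : HomDeg3 φ d)
    (hspan : Submodule.span S3 {eulerD, θ₂, θ₃, φ} = DA A)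
    (hmin : θ₂ ∉ Submodule.span S3 {eulerD, θ₃, φ}) {f₁ f₂ f₃ α : S3}
    (huniq : ∀ g₁ g₂ g₃ g₄ : S3, g₁ • eulerD + g₂ • θ₂ + g₃ • θ₃ + g₄ • φ = 0 →
      ∃ h : S3, g₁ = h * f₁ ∧ g₂ = h * f₂ ∧ g₃ = h * f₃ ∧ g₄ = h * α)
    {v : Fin 3 → ℂ} (hv : v ∈ A.hyps) {e : ℕ} (hZ : ZieglerExpsAre A v e d) :
    lin3 v ∣ α := by
  obtain ⟨B, hB, hvB, Θ₁, Θ₂, hΘ₁, hΘ₂, hspanZ, -⟩ := hZ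
  obtain ⟨m, F⟩ := exists_isPlaneFrame (A.forms_ne v hv) hB hvB
  have hgen : ∀ θ ∈ ({eulerD, θ₂, θ₃, φ} : Set (Fin 3 → S3)), θ ∈ DA A :=
    fun θ hθ => hspan ▸ Submodule.subset_span hθ
  obtain ⟨p₂, hη₂, hη₂a⟩ := exists_sub_smul_eulerD_mem_DH hv (hgen θ₂ (by simp)) h2
  obtain ⟨p₃, hη₃, hη₃b⟩ := exists_sub_smul_eulerD_mem_DH hv (hgen θ₃ (by simp)) h3
  have hlow : ∀ {η : Fin 3 → S3} {k : ℕ}, η ∈ DH A v → HomDeg3 η k → k < d →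
      ∃ q, zieglerRestrict B m η = q • Θ₁ := fun hη hk hkd =>
    exists_eq_smul_of_mem_span_pair hΘ₁ hΘ₂ (zieglerRestrict_isHomogeneous hk) hkd
      (hspanZ ▸ F.zieglerRestrict_mem_DZ hv hη)
  obtain ⟨q₂, hq₂⟩ := hlow hη₂ hη₂a (by omega)
  obtain ⟨q₃, hq₃⟩ := hlow hη₃ hη₃b hbd
  -- the syzygy of the two images in `D(A^H, m^H)`, lifted back to `D_H(A)`
  set Δ := liftPoly m q₃ • (θ₂ - p₂ • eulerD) - liftPoly m q₂ • (θ₃ - p₃ • eulerD)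
  have hΔ : Δ ∈ DH A v := sub_mem (Submodule.smul_mem _ _ hη₂) (Submodule.smul_mem _ _ hη₃)
  have hπΔ : zieglerRestrict B m Δ = 0 := by
    simp only [Δ, zieglerRestrict_sub, zieglerRestrict_smul, hq₂, hq₃, F.restrictPoly_liftPoly,
      smul_smul, mul_comm, sub_self]
  obtain ⟨ψ, hψ, hΔψ⟩ := F.exists_eq_lin3_smul_of_zieglerRestrict_eq_zero hv hΔ hπΔ
  obtain ⟨s₁, s₂, s₃, s₄, rfl⟩ := Submodule.exists_eq_of_mem_span_four (hspan ▸ hψ)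
  refine (dvd_or_dvd_of_syzygy (prime_lin3 F.ne_zero) huniq hΔψ).resolve_right fun hdvd => hmin ?_
  have hq₂0 : q₂ = 0 := by
    obtain ⟨r, hr⟩ := hdvd
    rw [← F.restrictPoly_liftPoly q₂, hr, map_mul, F.restrictPoly_lin3_self, zero_mul]
  obtain ⟨ψ₂, hψ₂, hη₂ψ₂⟩ := F.exists_eq_lin3_smul_of_zieglerRestrict_eq_zero hv hη₂
    (by rw [hq₂, hq₂0, zero_smul])
  rw [sub_eq_zero.mp (eq_zero_of_eq_lin3_smul hab hbd h2 h3 hφ hspan F.ne_zero hη₂.2 hη₂a hψ₂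
    hη₂ψ₂)]
  exact Submodule.smul_mem _ _ (Submodule.subset_span (by simp))

end PlusOneGenerated

/-- Let `A` be a plus-one generated line arrangement in `ℂ³` with
exponents `(a, b)` and level `d`, `a ≤ b < d`. If `H, L ∈ A` are hyperplanes such that
both Ziegler restrictions `(A^H, m^H)` and `(A^L, m^L)` have exponents `(a+b−d−1, d)`,
then `H = L`. -/
theorem stmt7 (A : Arr) (a b d : ℕ) (hab : a ≤ b) (hbd : b < d) (hpog : IsPOG A a b d)
    (v w : Fin 3 → ℂ) (hv : v ∈ A.hyps) (hw : w ∈ A.hyps)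
    (hv' : ZieglerExpsAre A v (a + b - d - 1) d)
    (hw' : ZieglerExpsAre A w (a + b - d - 1) d) :
    v = w := by
  obtain ⟨θ₂, θ₃, φ, h2, h3, hφ, hspan, -, hmin, -, -, f₁, f₂, f₃, α, hα0, hα1, -, huniq⟩ := hpog
  have hvα := lin3_dvd_of_zieglerExpsAre hab hbd h2 h3 hφ hspan hmin huniq hv hv'
  have hwα := lin3_dvd_of_zieglerExpsAre hab hbd h2 h3 hφ hspan hmin huniq hw hw'
  obtain ⟨c, rfl⟩ := exists_eq_C_mul_of_dvd (totalDegree_lin3 (A.forms_ne v hv))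
    (hα1.totalDegree hα0) hvα
  have hc : c ≠ 0 := by rintro rfl; simp at hα0
  exact A.eq_of_lin3_dvd_lin3 hv hw ((hc.isUnit.map C).dvd_mul_left.mp hwα)
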